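/- arXiv:2305.11758 — 3 statements merged into one kernel-verified Lean document; each statement's English description precedes it below -/
import Mathlib

section
/- Uniqueness direction of Theorem 1: if a categorized choice rule C satisfies the over-and-above principle, within-category fairness, and quota-filling subject to eligibility, then for every set of applicants A, C^o(A) = C^OA,o(A) and C^r(A) = C^OA,r(A) for every r ∈ R; in particular C coincides with the over-and-above choice rule C^OA. -/
/-!
The open category is forced: the over-and-above principle puts the top `qo` acceptable
applicants into it, and its capacity leaves room for nobody else. Given the open category,
the category-`r` selection lies in the pool of acceptable type-`r` applicants outside it, and
there it is closed upwards in merit (within-category fairness) and is either the whole pool or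
of size `q r` (quota filling). The only such subset of the pool is its top `q r`.
-/

open Finset

variable {α : Type*} [Fintype α] [DecidableEq α] [LinearOrder α]
variable {ρ : Type*} [Fintype ρ] [DecidableEq ρ]

/-- The top-`k` elements of `A` under the linear (merit) order on `α`, where
higher means more meritorious: the members of `A` that have fewer than `k`
strictly higher-ranked elements in `A`.  If `|A| ≤ k` this is all of `A`. -/
def topk (k : ℕ) (A : Finset α) : Finset α :=
  A.filter fun i => (A.filter fun j => i < j).card < k

/-- Open-category selection of the over-and-above choice rule: the
`min(qo, |A ∩ acc|)` highest-ranked acceptable applicants. -/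
def oaOpen (acc : Finset α) (qo : ℕ) (A : Finset α) : Finset α :=
  topk qo (A ∩ acc)

/-- Reserve-category-`r` selection of the over-and-above choice rule: the
`q r` highest-ranked acceptable type-`r` applicants not selected for the
open category. -/
def oaRes (acc : Finset α) (t : α → Option ρ) (qo : ℕ) (q : ρ → ℕ) (r : ρ)
    (A : Finset α) : Finset α :=
  topk (q r) (((A ∩ acc) \ oaOpen acc qo A).filter fun i => t i = some r)

/-- The set of applicants chosen by the over-and-above choice rule. -/
def oaChosen (acc : Finset α) (t : α → Option ρ) (qo : ℕ) (q : ρ → ℕ)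
    (A : Finset α) : Finset α :=
  oaOpen acc qo A ∪ Finset.univ.biUnion fun r => oaRes acc t qo q r A

/-- The over-and-above choice rule, by category (`none` is the open category,
`some r` is reserve category `r`). -/
def oaSel (acc : Finset α) (t : α → Option ρ) (qo : ℕ) (q : ρ → ℕ) :
    Option ρ → Finset α → Finset α
  | none => oaOpen acc qo
  | some r => oaRes acc t qo q r

/-- A categorized choice rule: for each set of applicants it selects a
pairwise-disjoint family consisting of an open-category selection (acceptable
applicants, at most `qo` of them) and, for each reserve category `r`, a
category-`r` selection (acceptable type-`r` applicants, at most `q r`). -/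
structure CatChoice (acc : Finset α) (t : α → Option ρ) (qo : ℕ) (q : ρ → ℕ) where
  sel : Option ρ → Finset α → Finset α
  sel_open_subset : ∀ A : Finset α, sel none A ⊆ A ∩ acc
  sel_open_card : ∀ A : Finset α, (sel none A).card ≤ qo
  sel_res_subset : ∀ (r : ρ) (A : Finset α),
    sel (some r) A ⊆ (A ∩ acc).filter fun i => t i = some r
  sel_res_card : ∀ (r : ρ) (A : Finset α), (sel (some r) A).card ≤ q r
  sel_disjoint : ∀ c c' : Option ρ, c ≠ c' → ∀ A : Finset α,
    Disjoint (sel c A) (sel c' A)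

/-- The chosen set of a categorized choice rule. -/
def CatChoice.chosen {acc : Finset α} {t : α → Option ρ} {qo : ℕ} {q : ρ → ℕ}
    (C : CatChoice acc t qo q) (A : Finset α) : Finset α :=
  Finset.univ.biUnion fun c : Option ρ => C.sel c A

/-- Over-and-above principle: every acceptable applicant whose rank among the
acceptable applicants of `A` is at most `qo` is selected for an open-category
position. -/
def OverAndAbovePrinciple {acc : Finset α} {t : α → Option ρ} {qo : ℕ} {q : ρ → ℕ}
    (C : CatChoice acc t qo q) : Prop :=
  ∀ A : Finset α, ∀ i ∈ A ∩ acc,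
    ((A ∩ acc).filter fun j => i < j).card < qo → i ∈ C.sel none A

/-- Within-category fairness: among acceptable applicants of the same
category, if a lower-merit one is chosen then so is a higher-merit one. -/
def WithinCategoryFair {acc : Finset α} {t : α → Option ρ} {qo : ℕ} {q : ρ → ℕ}
    (C : CatChoice acc t qo q) : Prop :=
  ∀ A : Finset α, ∀ i ∈ A, ∀ j ∈ A, i ∈ acc → j ∈ acc → t i = t j → j < i →
    j ∈ C.chosen A → i ∈ C.chosen A

/-- Quota-filling subject to eligibility: if an acceptable reserve-category-`r`
applicant is left unchosen, then all `q r` category-`r` positions are filled. -/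
def QuotaFilling {acc : Finset α} {t : α → Option ρ} {qo : ℕ} {q : ρ → ℕ}
    (C : CatChoice acc t qo q) : Prop :=
  ∀ A : Finset α, ∀ i ∈ A, i ∈ acc → ∀ r : ρ, t i = some r → i ∉ C.chosen A →
    (C.sel (some r) A).card = q r

section topk

variable {β : Type*} [LinearOrder β] {k : ℕ} {A S : Finset β} {i : β}

theorem mem_topk : i ∈ topk k A ↔ i ∈ A ∧ (A.filter fun j => i < j).card < k :=
  mem_filter

theorem topk_subset : topk k A ⊆ A :=
  filter_subset _ _

theorem strictAntiOn_card_filter_gt (A : Finset β) :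
    StrictAntiOn (fun i => (A.filter fun j => i < j).card) A := by
  intro j _ i hi hji
  refine card_lt_card ((ssubset_iff_of_subset fun x hx => ?_).2 ⟨i, ?_, ?_⟩)
  · rw [mem_filter] at hx ⊢
    exact ⟨hx.1, hji.trans hx.2⟩
  · exact mem_filter.2 ⟨hi, hji⟩
  · simp

theorem image_card_filter_gt (A : Finset β) :
    A.image (fun i => (A.filter fun j => i < j).card) = range A.card := by
  refine eq_of_subset_of_card_le (fun n hn => ?_) ?_
  · obtain ⟨i, hi, rfl⟩ := mem_image.1 hn
    exact mem_range.2 (card_lt_card (filter_ssubset.2 ⟨i, hi, lt_irrefl i⟩))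
  · rw [card_range, card_image_of_injOn (strictAntiOn_card_filter_gt A).injOn]

theorem card_topk (k : ℕ) (A : Finset β) : (topk k A).card = min k A.card := by
  have himage : (topk k A).image (fun i => (A.filter fun j => i < j).card) =
      (range A.card).filter (· < k) := by
    rw [← image_card_filter_gt, filter_image]
    rfl
  rw [← card_image_of_injOn ((strictAntiOn_card_filter_gt A).injOn.mono
    (coe_subset.2 topk_subset)), himage, ← card_range (min k A.card)]
  congr 1
  ext n
  simp only [mem_filter, mem_range, lt_min_iff, and_comm]

theorem eq_topk_of_topk_subset (htop : topk k A ⊆ S) (hSA : S ⊆ A) (hk : S.card ≤ k) :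
    S = topk k A :=
  (eq_of_subset_of_card_le htop (by rw [card_topk]; exact le_min hk (card_le_card hSA))).symm

theorem eq_topk_of_upwardClosed (hSA : S ⊆ A) (hup : ∀ j ∈ S, ∀ i ∈ A, j < i → i ∈ S)
    (hk : S.card ≤ k) (hfull : ∀ i ∈ A, i ∉ S → S.card = k) : S = topk k A := by
  refine eq_topk_of_topk_subset (fun i hi => ?_) hSA hk
  by_contra hiS
  obtain ⟨hiA, hrank⟩ := mem_topk.1 hi
  have hbelow : S ⊆ A.filter fun j => i < j := fun j hj =>
    mem_filter.2 ⟨hSA hj, lt_of_not_ge fun hji =>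
      hiS (hji.lt_or_eq.elim (hup j hj i hiA) (· ▸ hj))⟩
  exact (card_le_card hbelow).not_gt (hfull i hiA hiS ▸ hrank)

end topk

section OverAndAbove

variable {I R : Type*} [DecidableEq I] [LinearOrder I] [DecidableEq R]
  {acc : Finset I} {t : I → Option R} {qo : ℕ} {q : R → ℕ} {r : R} {A : Finset I} {i : I}

def reservePool (acc : Finset I) (t : I → Option R) (qo : ℕ) (r : R) (A : Finset I) :
    Finset I :=
  ((A ∩ acc) \ oaOpen acc qo A).filter fun i => t i = some r

theorem oaRes_eq_topk_reservePool :
    oaRes acc t qo q r A = topk (q r) (reservePool acc t qo r A) :=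
  rfl

theorem mem_reservePool : i ∈ reservePool acc t qo r A ↔
    i ∈ A ∧ i ∈ acc ∧ i ∉ oaOpen acc qo A ∧ t i = some r := by
  simp only [reservePool, mem_filter, mem_sdiff, mem_inter, and_assoc]

namespace CatChoice

variable (C : CatChoice acc t qo q)

theorem sel_none_eq_oaOpen (hOA : OverAndAbovePrinciple C) (A : Finset I) :
    C.sel none A = oaOpen acc qo A :=
  eq_topk_of_topk_subset (fun i hi => hOA A i (topk_subset hi) (mem_topk.1 hi).2)
    (C.sel_open_subset A) (C.sel_open_card A)

theorem sel_some_subset_reservePool (hOA : OverAndAbovePrinciple C) (r : R) (A : Finset I) :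
    C.sel (some r) A ⊆ reservePool acc t qo r A := by
  intro i hi
  obtain ⟨hiA, hit⟩ := mem_filter.1 (C.sel_res_subset r A hi)
  refine mem_filter.2 ⟨mem_sdiff.2 ⟨hiA, fun hio => ?_⟩, hit⟩
  rw [← C.sel_none_eq_oaOpen hOA] at hio
  exact disjoint_left.1 (C.sel_disjoint (some r) none (by simp) A) hi hio

theorem mem_chosen_iff_mem_sel_of_mem_reservePool [Fintype R] (hOA : OverAndAbovePrinciple C)
    (hi : i ∈ reservePool acc t qo r A) : i ∈ C.chosen A ↔ i ∈ C.sel (some r) A := by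
  obtain ⟨-, -, hio, hit⟩ := mem_reservePool.1 hi
  refine ⟨fun hc => ?_, fun hs => mem_biUnion.2 ⟨some r, mem_univ _, hs⟩⟩
  obtain ⟨c, -, hc⟩ := mem_biUnion.1 hc
  cases c with
  | none => exact absurd (C.sel_none_eq_oaOpen hOA A ▸ hc) hio
  | some r' =>
    obtain ⟨-, hit'⟩ := mem_filter.1 (C.sel_res_subset r' A hc)
    rwa [Option.some_injective _ (hit.symm.trans hit')]

end CatChoice

end OverAndAbove

/-- uniqueness direction of Theorem 1. If a categorized
choice rule satisfies the over-and-above principle, within-category fairness,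
and quota-filling subject to eligibility, then it coincides with the
over-and-above choice rule, category by category. -/
theorem uniqueness_of_over_and_above_rule
    (acc : Finset α) (t : α → Option ρ) (qo : ℕ) (q : ρ → ℕ)
    (C : CatChoice acc t qo q)
    (hOA : OverAndAbovePrinciple C) (hWCF : WithinCategoryFair C)
    (hQF : QuotaFilling C) :
    ∀ (A : Finset α) (c : Option ρ), C.sel c A = oaSel acc t qo q c A := by
  intro A c
  cases c with
  | none => exact C.sel_none_eq_oaOpen hOA A
  | some r =>
    rw [oaSel, oaRes_eq_topk_reservePool]
    have hpool := C.sel_some_subset_reservePool hOA r A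
    have hchosen {i} (hi : i ∈ reservePool acc t qo r A) :=
      C.mem_chosen_iff_mem_sel_of_mem_reservePool hOA hi
    refine eq_topk_of_upwardClosed hpool (fun j hj i hi hji => ?_) (C.sel_res_card r A)
      fun i hi hni => ?_
    · obtain ⟨hjA, hjacc, -, hjt⟩ := mem_reservePool.1 (hpool hj)
      obtain ⟨hiA, hiacc, -, hit⟩ := mem_reservePool.1 hi
      exact (hchosen hi).1 (hWCF A i hiA j hjA hiacc hjacc (hit.trans hjt.symm) hji
        ((hchosen (hpool hj)).2 hj))
    · obtain ⟨hiA, hiacc, -, hit⟩ := mem_reservePool.1 hi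
      exact hQF A i hiA hiacc r hit (mt (hchosen hi).1 hni)
end

section
/- The over-and-above choice rule is substitutable: for all individuals i, j ∈ I and every set A ⊆ I \ {i, j}, if i is not in the chosen set C^OA(A ∪ {i}), then i is not in the chosen set C^OA(A ∪ {i, j}). -/
/-! Enlarging the applicant pool can only push an applicant down in every top-`k` selection.
So an acceptable applicant who misses the open category from `A` also misses it from any
`B ⊇ A`; hence every reserve pool of `B` contains the corresponding pool of `A`, and an
applicant chosen for reserve category `r` from `B` is chosen for it from `A` as well. -/

open Finset

variable {α : Type*} [Fintype α] [DecidableEq α] [LinearOrder α]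
variable {ρ : Type*} [Fintype ρ] [DecidableEq ρ]

theorem mem_topk_of_subset {k : ℕ} {A B : Finset α} {x : α} (hAB : A ⊆ B) (hxA : x ∈ A)
    (hxB : x ∈ topk k B) : x ∈ topk k A := by
  simp only [topk, mem_filter] at hxB ⊢
  exact ⟨hxA, (card_le_card (filter_subset_filter _ hAB)).trans_lt hxB.2⟩

theorem mem_oaOpen_of_subset {acc : Finset α} {qo : ℕ} {A B : Finset α} {x : α}
    (hAB : A ⊆ B) (hxA : x ∈ A) (hxB : x ∈ oaOpen acc qo B) : x ∈ oaOpen acc qo A :=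
  mem_topk_of_subset (inter_subset_inter_right hAB)
    (mem_inter.2 ⟨hxA, (mem_inter.1 (mem_filter.1 hxB).1).2⟩) hxB

theorem mem_oaRes_of_subset {acc : Finset α} {t : α → Option ρ} {qo : ℕ} {q : ρ → ℕ}
    {r : ρ} {A B : Finset α} {x : α} (hAB : A ⊆ B) (hxA : x ∈ A)
    (hxo : x ∉ oaOpen acc qo A) (hxB : x ∈ oaRes acc t qo q r B) :
    x ∈ oaRes acc t qo q r A := by
  have pool_mono : ((A ∩ acc) \ oaOpen acc qo A).filter (fun i => t i = some r) ⊆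
      ((B ∩ acc) \ oaOpen acc qo B).filter (fun i => t i = some r) := by
    intro y hy
    simp only [mem_filter, mem_sdiff] at hy ⊢
    exact ⟨⟨inter_subset_inter_right hAB hy.1.1,
      fun hyB => hy.1.2 (mem_oaOpen_of_subset hAB (mem_inter.1 hy.1.1).1 hyB)⟩, hy.2⟩
  have hx_pool : x ∈ ((B ∩ acc) \ oaOpen acc qo B).filter (fun i => t i = some r) :=
    (mem_filter.1 hxB).1
  simp only [mem_filter, mem_sdiff, mem_inter] at hx_pool
  refine mem_topk_of_subset pool_mono ?_ hxB
  simp only [mem_filter, mem_sdiff, mem_inter]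
  exact ⟨⟨⟨hxA, hx_pool.1.1.2⟩, hxo⟩, hx_pool.2⟩

theorem mem_oaChosen_of_subset {acc : Finset α} {t : α → Option ρ} {qo : ℕ} {q : ρ → ℕ}
    {A B : Finset α} {x : α} (hAB : A ⊆ B) (hxA : x ∈ A)
    (hxB : x ∈ oaChosen acc t qo q B) : x ∈ oaChosen acc t qo q A := by
  simp only [oaChosen, mem_union, mem_biUnion, mem_univ, true_and] at hxB ⊢
  by_cases hxo : x ∈ oaOpen acc qo A
  · exact Or.inl hxo
  · rcases hxB with hxB | ⟨r, hxB⟩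
    · exact Or.inl (mem_oaOpen_of_subset hAB hxA hxB)
    · exact Or.inr ⟨r, mem_oaRes_of_subset hAB hxA hxo hxB⟩

theorem oa_substitutable_general
    (acc : Finset α) (t : α → Option ρ) (qo : ℕ) (q : ρ → ℕ)
    (i j : α) (A : Finset α)
    (h : i ∉ oaChosen acc t qo q (insert i A)) :
    i ∉ oaChosen acc t qo q (insert j (insert i A)) :=
  fun hi => h (mem_oaChosen_of_subset (subset_insert _ _) (mem_insert_self _ _) hi)

/-- The over-and-above choice rule is substitutable: for
individuals `i, j` and a set `A ⊆ I \ {i, j}`, if `i` is not chosen from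
`A ∪ {i}`, then `i` is not chosen from `A ∪ {i, j}`. -/
theorem oa_substitutable
    (acc : Finset α) (t : α → Option ρ) (qo : ℕ) (q : ρ → ℕ)
    (i j : α) (A : Finset α) (hiA : i ∉ A) (hjA : j ∉ A)
    (h : i ∉ oaChosen acc t qo q (insert i A)) :
    i ∉ oaChosen acc t qo q (insert j (insert i A)) :=
  oa_substitutable_general acc t qo q i j A h
end

section
/- Example 2 (failure of the 'if' direction of the informal characterization in Sönmez and Yenmez (2022) under a literal reading of 'all positions have to be filled'): there exists an instance with one reserve category r, capacities q^o = 1 and q^r = 1, and two acceptable individuals i and j with t(i) = r, t(j) = GC, and i ≻ j, such that C^OA({i,j}) selects only i (assigning i the open position and leaving the category-r position unfilled), whereas the alternative categorized selection assigning j the open position and i the category-r position satisfies within-category fairness and disjointness of category selections and fills strictly more positions than C^OA({i,j}). -/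
open Finset

variable {α : Type*} [Fintype α] [DecidableEq α] [LinearOrder α]
variable {ρ : Type*} [Fintype ρ] [DecidableEq ρ]

theorem topk_one_pair {β : Type*} [LinearOrder β] {a b : β} (hab : a < b) :
    topk 1 {a, b} = {b} := by
  ext i
  simp only [topk, mem_filter, mem_insert, mem_singleton, Nat.lt_one_iff, card_eq_zero,
    filter_eq_empty_iff]
  constructor
  · rintro ⟨rfl | rfl, h⟩
    · exact absurd hab (h (by simp))
    · rfl
  · rintro rfl
    refine ⟨Or.inr rfl, ?_⟩
    rintro j (rfl | rfl) <;> simp [hab.le]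

theorem oaRes_eq_empty_of_forall_ne {β σ : Type*} [DecidableEq β] [LinearOrder β]
    [DecidableEq σ] {acc A : Finset β} {t : β → Option σ} {qo : ℕ} {q : σ → ℕ} {r : σ}
    (h : ∀ i ∈ (A ∩ acc) \ oaOpen acc qo A, t i ≠ some r) :
    oaRes acc t qo q r A = ∅ := by
  rw [oaRes, filter_false_of_mem h]
  rfl

theorem oaChosen_eq_oaOpen_of_forall_oaRes_eq_empty {β σ : Type*} [DecidableEq β]
    [LinearOrder β] [Fintype σ] [DecidableEq σ] {acc A : Finset β} {t : β → Option σ}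
    {qo : ℕ} {q : σ → ℕ} (h : ∀ r, oaRes acc t qo q r A = ∅) :
    oaChosen acc t qo q A = oaOpen acc qo A := by
  rw [oaChosen, union_eq_left, biUnion_subset]
  exact fun r _ => (h r).le.trans (empty_subset _)

/-- Example 2. An instance with one reserve category, one
open and one reserved position, and two acceptable individuals `1 ≻ 0` where
`1` has category `r` and `0` is a general-category individual.  The
over-and-above rule selects only `1` (for the open position, leaving the
category-`r` position unfilled), whereas the alternative categorized selection
giving `0` the open position and `1` the category-`r` position satisfies
within-category fairness and disjointness of category selections and fills
strictly more positions. -/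
theorem example2_if_direction_fails :
    -- the over-and-above rule assigns the open position to `1` …
    oaOpen (α := Fin 2) Finset.univ 1 {0, 1} = {(1 : Fin 2)} ∧
    -- … leaves the category-`r` position unfilled …
    oaRes (α := Fin 2) (ρ := Unit) Finset.univ
      (fun x => if x = 1 then some () else none) 1 (fun _ => 1) () {0, 1} = ∅ ∧
    -- … so it selects only `1` …
    oaChosen (α := Fin 2) (ρ := Unit) Finset.univ
      (fun x => if x = 1 then some () else none) 1 (fun _ => 1) {0, 1}
      = {(1 : Fin 2)} ∧
    -- … the alternative selection (open = {0}, category r = {1}) is a valid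
    -- categorized selection from {0,1}: sizes within quotas, the reserved
    -- individual has category r, and the selections are disjoint …
    ({(0 : Fin 2)} : Finset (Fin 2)) ⊆ {0, 1} ∧
    ({(1 : Fin 2)} : Finset (Fin 2)) ⊆ {0, 1} ∧
    ({(0 : Fin 2)} : Finset (Fin 2)).card ≤ 1 ∧
    ({(1 : Fin 2)} : Finset (Fin 2)).card ≤ 1 ∧
    (∀ i ∈ ({(1 : Fin 2)} : Finset (Fin 2)),
      (fun x : Fin 2 => if x = 1 then some () else (none : Option Unit)) i
        = some ()) ∧
    Disjoint ({(0 : Fin 2)} : Finset (Fin 2)) ({(1 : Fin 2)} : Finset (Fin 2)) ∧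
    -- … it satisfies within-category fairness …
    (∀ i ∈ ({0, 1} : Finset (Fin 2)), ∀ j ∈ ({0, 1} : Finset (Fin 2)),
      (fun x : Fin 2 => if x = 1 then some () else (none : Option Unit)) i
        = (fun x : Fin 2 => if x = 1 then some () else none) j →
      j < i →
      j ∈ ({(0 : Fin 2)} : Finset (Fin 2)) ∪ {(1 : Fin 2)} →
      i ∈ ({(0 : Fin 2)} : Finset (Fin 2)) ∪ {(1 : Fin 2)}) ∧
    -- … and it fills strictly more positions than the over-and-above rule.
    (oaChosen (α := Fin 2) (ρ := Unit) Finset.univ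
        (fun x => if x = 1 then some () else none) 1 (fun _ => 1) {0, 1}).card
      < (({(0 : Fin 2)} : Finset (Fin 2)) ∪ {(1 : Fin 2)}).card := by
  have hopen : oaOpen (α := Fin 2) Finset.univ 1 {0, 1} = {(1 : Fin 2)} := by
    rw [oaOpen, inter_univ]
    exact topk_one_pair (by decide)
  -- The only category-`r` applicant, `1`, has already taken the open position.
  have hres : oaRes (α := Fin 2) (ρ := Unit) Finset.univ
      (fun x => if x = 1 then some () else none) 1 (fun _ => 1) () {0, 1} = ∅ :=
    oaRes_eq_empty_of_forall_ne (by rw [hopen]; decide)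
  have hchosen : oaChosen (α := Fin 2) (ρ := Unit) Finset.univ
      (fun x => if x = 1 then some () else none) 1 (fun _ => 1) {0, 1} = {(1 : Fin 2)} := by
    rw [oaChosen_eq_oaOpen_of_forall_oaRes_eq_empty fun () => hres, hopen]
  exact ⟨hopen, hres, hchosen, by decide, by decide, by decide, by decide, by decide, by decide,
    by decide, by rw [hchosen]; decide⟩
end
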